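/- (Bochner's theorem for matrix-valued maps on finite groups.) Let G be a finite group and (ρ_i)_{i ∈ I} a complete family of unitary matrix representations ρ_i : G → Matrix (Fin (d i)) (Fin (d i)) ℂ. Then a map Φ : G → Matrix (Fin n) (Fin n) ℂ is positive definite if and only if the Fourier transform Φ̂(ρ_i) is positive semidefinite for every i ∈ I. -/

import Mathlib

/-!
Let `K_Φ` be the block matrix `(Φ (g⁻¹ * g'))_{g, g'}` and, for a unitary representation `ρ`
and a row index `c`, let `W_c = (ρ(g)_{c a})_{g, a} ⊗ₖ 1`. Unitarity gives
`∑ c, conj (ρ(h)_{c a}) ρ(k)_{c b} = ρ(h⁻¹ k)_{a b}`, hence `∑ c, W_cᴴ K_Φ W_c = |G| • Φ̂(ρ)`,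
which is positive semidefinite whenever `K_Φ` is.

Conversely, completeness makes `ℂ[G] ≃ₐ ∏ i, Matrix (Fin (d i)) (Fin (d i)) ℂ`. Comparing the
traces of left multiplication by `g` on both sides gives `∑ i, d i * tr ρ_i(g) = |G| δ_{g, 1}`,
and with this Fourier inversion reads `∑ i, d i • ∑ c, W_{i,c} Φ̂(ρ_i) W_{i,c}ᴴ = |G| • K_Φ`,
a sum of positive semidefinite matrices.
-/

open scoped Kronecker Matrix ComplexOrder

namespace Stmt10

/-- The Fourier transform `Φ̂(ρ) = ∑ g, ρ g ⊗ₖ Φ g`. -/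
noncomputable def fourier {G : Type*} [Fintype G] {d n : ℕ}
    (ρ : G → Matrix (Fin d) (Fin d) ℂ) (Φ : G → Matrix (Fin n) (Fin n) ℂ) :
    Matrix (Fin d × Fin n) (Fin d × Fin n) ℂ :=
  ∑ g : G, ρ g ⊗ₖ Φ g

/-- `Φ : G → Matrix (Fin n) (Fin n) ℂ` is positive definite if the matrix with entries
`((g,a),(g',b)) ↦ (Φ (g⁻¹ * g')) a b` is positive semidefinite. -/
def IsPosDefMap {G : Type*} [Group G] [Fintype G] {n : ℕ}
    (Φ : G → Matrix (Fin n) (Fin n) ℂ) : Prop :=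
  Matrix.PosSemidef (Matrix.of fun p q : G × Fin n => Φ (p.1⁻¹ * q.1) p.2 q.2)

end Stmt10

namespace Matrix

variable {R : Type*} [CommSemiring R] [StarRing R] {l m n : Type*} [Fintype n] [DecidableEq n]

lemma conjTranspose_kronecker_one_mul_mul_apply [Fintype m]
    (A : Matrix m l R) (K : Matrix (m × n) (m × n) R) (a b : l) (p q : n) :
    ((A ⊗ₖ (1 : Matrix n n R))ᴴ * K * (A ⊗ₖ (1 : Matrix n n R))) (a, p) (b, q) =
      ∑ h, ∑ k, star (A h a) * K (h, p) (k, q) * A k b := by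
  simp [mul_apply, Fintype.sum_prod_type, one_apply, Finset.sum_mul, apply_ite star, ite_mul]
  exact Finset.sum_comm

lemma kronecker_one_mul_mul_conjTranspose_apply [Fintype l]
    (A : Matrix m l R) (K : Matrix (l × n) (l × n) R) (g h : m) (p q : n) :
    ((A ⊗ₖ (1 : Matrix n n R)) * K * (A ⊗ₖ (1 : Matrix n n R))ᴴ) (g, p) (h, q) =
      ∑ a, ∑ b, A g a * K (a, p) (b, q) * star (A h b) := by
  simp [mul_apply, Fintype.sum_prod_type, one_apply, Finset.sum_mul, apply_ite star, ite_mul]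
  exact Finset.sum_comm

omit [DecidableEq n] in
lemma trace_mul_mul_conjTranspose [Fintype l] [Fintype m] (P : Matrix n l R) (X : Matrix l m R)
    (Q : Matrix n m R) : (P * X * Qᴴ).trace = ∑ c, ∑ a, ∑ b, P c a * X a b * star (Q c b) := by
  simp only [trace, diag, mul_apply, conjTranspose_apply, Finset.sum_mul]
  exact Finset.sum_congr rfl fun c _ => Finset.sum_comm

lemma PosSemidef.of_smul [Fintype m] {X : Matrix m m ℂ} {c : ℂ} (hc : 0 < c)
    (h : (c • X).PosSemidef) : X.PosSemidef := by
  simpa [smul_smul, hc.ne'] using h.smul (inv_nonneg.2 hc.le)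

end Matrix

lemma Fintype.sum_sum_inv_mul {G M : Type*} [Group G] [Fintype G] [AddCommMonoid M]
    (f : G → M) : ∑ h, ∑ k, f (h⁻¹ * k) = Fintype.card G • ∑ g, f g := by
  simp [(Group.mulLeft_bijective _).sum_comp f]

lemma MonoidAlgebra.trace_mulLeft_of {k G : Type*} [CommRing k] [Group G] [Fintype G]
    [DecidableEq G] (u : G) :
    LinearMap.trace k (MonoidAlgebra k G) (LinearMap.mulLeft k (MonoidAlgebra.of k G u)) =
      if u = 1 then (Fintype.card G : k) else 0 := by
  have repr_apply (x : MonoidAlgebra k G) : (MonoidAlgebra.basis G k).repr x = x.coeff := rfl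
  rw [LinearMap.trace_eq_matrix_trace k (MonoidAlgebra.basis G k), Matrix.trace]
  simp only [Matrix.diag, LinearMap.toMatrix_apply, LinearMap.mulLeft_apply]
  simp [repr_apply, MonoidAlgebra.coeff_single, Finsupp.single_apply]

lemma LinearMap.trace_mulLeft_pi_matrix {R I : Type*} [CommRing R] [Fintype I] {ι : I → Type*}
    [∀ i, Fintype (ι i)] [∀ i, DecidableEq (ι i)] (M : ∀ i, Matrix (ι i) (ι i) R) :
    LinearMap.trace R (∀ i, Matrix (ι i) (ι i) R) (LinearMap.mulLeft R M) =
      ∑ i, (Fintype.card (ι i) : R) * (M i).trace := by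
  classical
  rw [LinearMap.trace_eq_matrix_trace R (Pi.basis fun i => Matrix.stdBasis R (ι i) (ι i)),
    Matrix.trace, ← Finset.univ_sigma_univ, Finset.sum_sigma]
  refine Finset.sum_congr rfl fun i _ => ?_
  have repr_apply (X : Matrix (ι i) (ι i) R) (p q : ι i) :
      (Matrix.stdBasis R (ι i) (ι i)).repr X (p, q) = X p q := rfl
  simp only [Matrix.diag, LinearMap.toMatrix_apply, LinearMap.mulLeft_apply]
  simp [Matrix.stdBasis_eq_single, Fintype.sum_prod_type, repr_apply,
    Matrix.mul_single_apply_same, Matrix.trace, Finset.mul_sum]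

lemma MonoidAlgebra.sum_card_mul_trace_algEquiv_of {k G I : Type*} [CommRing k] [Group G]
    [Fintype G] [DecidableEq G] [Fintype I] {ι : I → Type*} [∀ i, Fintype (ι i)]
    [∀ i, DecidableEq (ι i)] (e : MonoidAlgebra k G ≃ₐ[k] ∀ i, Matrix (ι i) (ι i) k) (u : G) :
    ∑ i, (Fintype.card (ι i) : k) * (e (MonoidAlgebra.of k G u) i).trace =
      if u = 1 then (Fintype.card G : k) else 0 := by
  have hconj (x : MonoidAlgebra k G) :
      LinearMap.mulLeft k (e x) = e.toLinearEquiv.conj (LinearMap.mulLeft k x) := by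
    ext y
    simp [LinearEquiv.conj_apply]
  rw [← LinearMap.trace_mulLeft_pi_matrix, hconj, LinearMap.trace_conj',
    MonoidAlgebra.trace_mulLeft_of]

namespace Stmt10

open Matrix

section

variable {G : Type*} {d n : ℕ}

def kernelMatrix [Group G] (Φ : G → Matrix (Fin n) (Fin n) ℂ) :
    Matrix (G × Fin n) (G × Fin n) ℂ :=
  Matrix.of fun p q => Φ (p.1⁻¹ * q.1) p.2 q.2

lemma isPosDefMap_iff_posSemidef_kernelMatrix [Group G] [Fintype G]
    (Φ : G → Matrix (Fin n) (Fin n) ℂ) : IsPosDefMap Φ ↔ (kernelMatrix Φ).PosSemidef :=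
  Iff.rfl

def coeffRow (ρ : G → Matrix (Fin d) (Fin d) ℂ) (c : Fin d) : Matrix G (Fin d) ℂ :=
  Matrix.of fun g a => ρ g c a

lemma fourier_apply [Fintype G] (ρ : G → Matrix (Fin d) (Fin d) ℂ)
    (Φ : G → Matrix (Fin n) (Fin n) ℂ) (a b : Fin d) (p q : Fin n) :
    fourier ρ Φ (a, p) (b, q) = ∑ g, ρ g a b * Φ g p q := by
  simp [fourier, Matrix.sum_apply]

variable [Group G] {ρ : G → Matrix (Fin d) (Fin d) ℂ}
    (hmul : ∀ g h : G, ρ (g * h) = ρ g * ρ h) (hstar : ∀ g : G, (ρ g)ᴴ = ρ g⁻¹)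
include hmul hstar

lemma sum_star_mul_eq_inv_mul (h k : G) (a b : Fin d) :
    ∑ c, star (ρ h c a) * ρ k c b = ρ (h⁻¹ * k) a b := by
  simp [hmul, ← hstar, Matrix.mul_apply]

variable [Fintype G]

lemma sum_conjTranspose_mul_kernelMatrix_mul (Φ : G → Matrix (Fin n) (Fin n) ℂ) :
    ∑ c, (coeffRow ρ c ⊗ₖ (1 : Matrix (Fin n) (Fin n) ℂ))ᴴ * kernelMatrix Φ *
      (coeffRow ρ c ⊗ₖ (1 : Matrix (Fin n) (Fin n) ℂ)) = (Fintype.card G : ℂ) • fourier ρ Φ := by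
  ext ⟨a, p⟩ ⟨b, q⟩
  calc _ = ∑ h, ∑ k, (∑ c, star (ρ h c a) * ρ k c b) * Φ (h⁻¹ * k) p q := by
        simp only [Matrix.sum_apply, conjTranspose_kronecker_one_mul_mul_apply, Finset.sum_mul]
        rw [Finset.sum_comm]
        refine Finset.sum_congr rfl fun h _ => ?_
        rw [Finset.sum_comm]
        refine Finset.sum_congr rfl fun k _ => Finset.sum_congr rfl fun c _ => ?_
        simp only [coeffRow, kernelMatrix, Matrix.of_apply]
        ring
    _ = ∑ h, ∑ k, ρ (h⁻¹ * k) a b * Φ (h⁻¹ * k) p q := by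
        simp only [sum_star_mul_eq_inv_mul hmul hstar]
    _ = _ := by
        rw [Fintype.sum_sum_inv_mul (fun g => ρ g a b * Φ g p q), Matrix.smul_apply,
          fourier_apply, nsmul_eq_mul, smul_eq_mul]

lemma sum_kronecker_one_mul_fourier_mul_conjTranspose (Φ : G → Matrix (Fin n) (Fin n) ℂ) :
    ∑ c, (coeffRow ρ c ⊗ₖ (1 : Matrix (Fin n) (Fin n) ℂ)) * fourier ρ Φ *
      (coeffRow ρ c ⊗ₖ (1 : Matrix (Fin n) (Fin n) ℂ))ᴴ =
      Matrix.of fun x y => ∑ s, (ρ (x.1 * s * y.1⁻¹)).trace * Φ s x.2 y.2 := by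
  ext ⟨g, p⟩ ⟨h, q⟩
  have htrace (s : G) : (ρ (g * s * h⁻¹)).trace =
      ∑ c, ∑ a, ∑ b, ρ g c a * ρ s a b * star (ρ h c b) := by
    rw [hmul, hmul, ← hstar, trace_mul_mul_conjTranspose]
  simp only [Matrix.sum_apply, kronecker_one_mul_mul_conjTranspose_apply, fourier_apply,
    coeffRow, Matrix.of_apply, htrace, Finset.sum_mul, Finset.mul_sum]
  symm
  rw [Finset.sum_comm]; refine Finset.sum_congr rfl fun c _ => ?_
  rw [Finset.sum_comm]; refine Finset.sum_congr rfl fun a _ => ?_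
  rw [Finset.sum_comm]; refine Finset.sum_congr rfl fun b _ => Finset.sum_congr rfl fun s _ => ?_
  ring

end

lemma sum_smul_sum_kronecker_one_mul_fourier_mul_conjTranspose {G : Type*} [Group G] [Fintype G]
    [DecidableEq G] {I : Type*} [Fintype I] (d : I → ℕ)
    (ρ : ∀ i, G → Matrix (Fin (d i)) (Fin (d i)) ℂ)
    (hmul : ∀ i (g h : G), ρ i (g * h) = ρ i g * ρ i h)
    (hstar : ∀ i (g : G), (ρ i g)ᴴ = ρ i g⁻¹)
    (hchar : ∀ u : G, ∑ i, (d i : ℂ) * (ρ i u).trace =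
      if u = 1 then (Fintype.card G : ℂ) else 0)
    {n : ℕ} (Φ : G → Matrix (Fin n) (Fin n) ℂ) :
    ∑ i, (d i : ℂ) • ∑ c, (coeffRow (ρ i) c ⊗ₖ (1 : Matrix (Fin n) (Fin n) ℂ)) *
      fourier (ρ i) Φ * (coeffRow (ρ i) c ⊗ₖ (1 : Matrix (Fin n) (Fin n) ℂ))ᴴ =
      (Fintype.card G : ℂ) • kernelMatrix Φ := by
  simp only [sum_kronecker_one_mul_fourier_mul_conjTranspose (hmul _) (hstar _)]
  ext ⟨g, p⟩ ⟨h, q⟩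
  calc _ = ∑ s, (∑ i, (d i : ℂ) * (ρ i (g * s * h⁻¹)).trace) * Φ s p q := by
        simp only [Matrix.sum_apply, Matrix.smul_apply, Matrix.of_apply, smul_eq_mul,
          Finset.mul_sum, Finset.sum_mul, mul_assoc]
        exact Finset.sum_comm
    _ = ∑ s, if s = g⁻¹ * h then (Fintype.card G : ℂ) * Φ s p q else 0 := by
        simp [hchar, mul_inv_eq_one, eq_inv_mul_iff_mul_eq]
    _ = _ := by simp [kernelMatrix]

theorem bochner
    {G : Type*} [Group G] [Fintype G] {I : Type*} [Fintype I]
    (d : I → ℕ) (ρ : ∀ i, G → Matrix (Fin (d i)) (Fin (d i)) ℂ)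
    (hmul : ∀ i (g h : G), ρ i (g * h) = ρ i g * ρ i h)
    (hone : ∀ i, ρ i 1 = 1)
    (hstar : ∀ i (g : G), (ρ i g)ᴴ = ρ i g⁻¹)
    (hcomplete : Function.Bijective
      ((MonoidAlgebra.lift ℂ (∀ i, Matrix (Fin (d i)) (Fin (d i)) ℂ) G)
        { toFun := fun g i => ρ i g
          map_one' := funext fun i => hone i
          map_mul' := fun g h => funext fun i => hmul i g h }))
    {n : ℕ} (Φ : G → Matrix (Fin n) (Fin n) ℂ) :
    IsPosDefMap Φ ↔ ∀ i : I, Matrix.PosSemidef (fourier (ρ i) Φ) := by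
  classical
  have hG : (0 : ℂ) < Fintype.card G := by exact_mod_cast Fintype.card_pos
  rw [isPosDefMap_iff_posSemidef_kernelMatrix]
  constructor
  · intro hK i
    refine PosSemidef.of_smul hG ?_
    rw [← sum_conjTranspose_mul_kernelMatrix_mul (hmul i) (hstar i)]
    exact posSemidef_sum _ fun c _ => hK.conjTranspose_mul_mul_same _
  · intro hF
    have hchar (u : G) : ∑ i, (d i : ℂ) * (ρ i u).trace =
        if u = 1 then (Fintype.card G : ℂ) else 0 := by
      simpa using MonoidAlgebra.sum_card_mul_trace_algEquiv_of (AlgEquiv.ofBijective _ hcomplete) u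
    refine PosSemidef.of_smul hG ?_
    rw [← sum_smul_sum_kronecker_one_mul_fourier_mul_conjTranspose d ρ hmul hstar hchar]
    exact posSemidef_sum _ fun i _ =>
      (posSemidef_sum _ fun c _ => (hF i).mul_mul_conjTranspose_same _).smul (Nat.cast_nonneg _)

end Stmt10
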